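/- arXiv:1306.1129 — 2 statements merged into one kernel-verified Lean document; each statement's English description precedes it below -/
import Mathlib

section
/- Let S be a complete idempotent semiring with dual product ⊙, B ∈ S^{n×n}, X ∈ S^{n×p}, and B_* := ⋀_{k≥0} B^{⊙k} the meet-closure of B (with B^{⊙0} the dual identity matrix E^⊙). Then the following are equivalent: (1) X ≤ B ⊙ X; (2) B ⧵♭ X ≤ X, where B ⧵♭ X is the dual residual of Y ↦ B ⊙ Y applied to X; (3) B_* ⧵♭ X = X; (4) B_* ⊙ X = X. -/
/-!
Because `B_* ≤ E^⊙`, every `Y` satisfies `B_* ⊙ Y ≤ Y` and `Y ≤ B_* ⧵♭ Y`, so (3) and (4) each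
reduce to `X ≤ B_* ⊙ X`. Iterating `X ≤ B ⊙ X` gives `X ≤ B^{⊙k} ⊙ X` for every `k`, hence
`X ≤ B_* ⊙ X` since `⊙` distributes over meets; conversely `B_* ≤ B`. Finally `B ⧵♭ ·` is the
lower adjoint of `B ⊙ ·`, which is (1) ⇔ (2).
-/

/-- A complete idempotent semiring: a complete lattice whose join is the (idempotent)
addition, together with a multiplicative monoid structure distributing over
arbitrary joins (hence `⊥` is absorbing). -/
class CompleteIdempotentSemiring (S : Type*) extends CompleteLattice S, Monoid S where
  mul_sSup : ∀ (a : S) (s : Set S), a * sSup s = ⨆ x ∈ s, a * x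
  sSup_mul : ∀ (a : S) (s : Set S), sSup s * a = ⨆ x ∈ s, x * a

/-- Matrices over `S`, with the pointwise (complete-lattice) order. -/
abbrev Mat (n p : ℕ) (S : Type*) := Fin n → Fin p → S

variable {S : Type*} [CompleteIdempotentSemiring S]

/-- A dual product on `S`: associative, with identity `1`, distributing over
arbitrary meets, and with `⊤` absorbing. -/
structure IsDualProduct (od : S → S → S) : Prop where
  assoc : ∀ a b c : S, od (od a b) c = od a (od b c)
  one_od : ∀ a : S, od 1 a = a
  od_one : ∀ a : S, od a 1 = a
  od_sInf : ∀ (a : S) (s : Set S), od a (sInf s) = ⨅ x ∈ s, od a x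
  sInf_od : ∀ (a : S) (s : Set S), od (sInf s) a = ⨅ x ∈ s, od x a
  top_od : ∀ a : S, od ⊤ a = ⊤
  od_top : ∀ a : S, od a ⊤ = ⊤

/-- Dual matrix product: `(A ⊙ X) i j = ⨅ k, A i k ⊙ X k j`. -/
def dmul (od : S → S → S) {n p m : ℕ} (A : Mat n p S) (X : Mat p m S) : Mat n m S :=
  fun i j => ⨅ k, od (A i k) (X k j)

/-- Ordinary matrix product in the idempotent semiring: `(A ⊗ X) i j = ⨆ k, A i k * X k j`. -/
def mmul {n p m : ℕ} (A : Mat n p S) (X : Mat p m S) : Mat n m S :=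
  fun i j => ⨆ k, A i k * X k j

/-- Dual identity matrix: `1` on the diagonal, `⊤` elsewhere. -/
def dualId (n : ℕ) : Mat n n S := fun i j => if i = j then 1 else ⊤

/-- Iterated dual matrix product `B^{⊙k}`. -/
def dpow (od : S → S → S) {n : ℕ} (B : Mat n n S) : ℕ → Mat n n S
  | 0 => dualId n
  | k + 1 => dmul od B (dpow od B k)

/-- Dual (meet) closure `B_* = ⋀_{k ≥ 0} B^{⊙k}`. -/
def dstar (od : S → S → S) {n : ℕ} (B : Mat n n S) : Mat n n S :=
  ⨅ k : ℕ, dpow od B k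

/-- Iterated matrix product `A^k`. -/
def mpow {n : ℕ} (A : Mat n n S) : ℕ → Mat n n S
  | 0 => fun i j => if i = j then 1 else ⊥
  | k + 1 => mmul A (mpow A k)

/-- Kleene star `A^* = ⊕_{k ≥ 0} A^k`. -/
def mstar {n : ℕ} (A : Mat n n S) : Mat n n S :=
  ⨆ k : ℕ, mpow A k

theorem galoisConnection_of_isLeast {α β : Type*} [Preorder α] [Preorder β] {l : α → β}
    {u : β → α} (hu : Monotone u) (hl : ∀ a, IsLeast {b | a ≤ u b} (l a)) :
    GaloisConnection l u :=
  fun a _ => ⟨fun h => (hl a).1.trans (hu h), fun h => (hl a).2 h⟩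

namespace IsDualProduct

variable {od : S → S → S}

theorem od_iInf (hod : IsDualProduct od) (a : S) {ι : Sort*} (f : ι → S) :
    od a (⨅ i, f i) = ⨅ i, od a (f i) := by
  rw [iInf, hod.od_sInf, iInf_range]

theorem iInf_od (hod : IsDualProduct od) (a : S) {ι : Sort*} (f : ι → S) :
    od (⨅ i, f i) a = ⨅ i, od (f i) a := by
  rw [iInf, hod.sInf_od, iInf_range]

theorem od_mono_right (hod : IsDualProduct od) (a : S) : Monotone (od a) := fun x y hxy =>
  calc od a x = od a (sInf {x, y}) := by rw [sInf_pair, inf_of_le_left hxy]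
    _ = ⨅ z ∈ ({x, y} : Set S), od a z := hod.od_sInf a _
    _ ≤ od a y := iInf₂_le y (by simp)

theorem od_mono_left (hod : IsDualProduct od) (a : S) : Monotone (od · a) := fun x y hxy =>
  calc od x a = od (sInf {x, y}) a := by rw [sInf_pair, inf_of_le_left hxy]
    _ = ⨅ z ∈ ({x, y} : Set S), od z a := hod.sInf_od a _
    _ ≤ od y a := iInf₂_le y (by simp)

end IsDualProduct

section DualMatrixProduct

variable {od : S → S → S}

theorem dmul_mono (hod : IsDualProduct od) {n p m : ℕ} {A A' : Mat n p S} {X X' : Mat p m S}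
    (hA : A ≤ A') (hX : X ≤ X') : dmul od A X ≤ dmul od A' X' := fun i j =>
  iInf_mono fun k => (hod.od_mono_left _ (hA i k)).trans (hod.od_mono_right _ (hX k j))

theorem dualId_dmul (hod : IsDualProduct od) {n m : ℕ} (X : Mat n m S) :
    dmul od (dualId n) X = X := by
  funext i j
  simp only [dmul, dualId, apply_ite od, ite_apply, hod.one_od, hod.top_od]
  simp only [← iInf_eq_if, iInf_iInf_eq_right]

theorem dmul_dualId (hod : IsDualProduct od) {n m : ℕ} (A : Mat n m S) :
    dmul od A (dualId m) = A := by
  funext i j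
  simp only [dmul, dualId, apply_ite (od _), hod.od_one, hod.od_top]
  simp only [← iInf_eq_if, iInf_iInf_eq_left]

theorem dmul_assoc (hod : IsDualProduct od) {n p m q : ℕ} (A : Mat n p S) (B : Mat p m S)
    (X : Mat m q S) : dmul od (dmul od A B) X = dmul od A (dmul od B X) := by
  funext i j
  calc ⨅ k, od (⨅ l, od (A i l) (B l k)) (X k j)
      = ⨅ k, ⨅ l, od (A i l) (od (B l k) (X k j)) := by simp only [hod.iInf_od, hod.assoc]
    _ = ⨅ l, od (A i l) (⨅ k, od (B l k) (X k j)) := by rw [iInf_comm]; simp only [hod.od_iInf]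

theorem iInf_dmul (hod : IsDualProduct od) {n p m : ℕ} {ι : Sort*} (A : ι → Mat n p S)
    (X : Mat p m S) : dmul od (⨅ i, A i) X = ⨅ i, dmul od (A i) X := by
  funext i j
  simp only [dmul, iInf_apply, hod.iInf_od]
  exact iInf_comm

theorem dmul_le_of_le_dualId (hod : IsDualProduct od) {n m : ℕ} {M : Mat n n S}
    (hM : M ≤ dualId n) (X : Mat n m S) : dmul od M X ≤ X :=
  (dmul_mono hod hM le_rfl).trans_eq (dualId_dmul hod X)

theorem dmul_eq_self_iff_of_le_dualId (hod : IsDualProduct od) {n m : ℕ} {M : Mat n n S}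
    (hM : M ≤ dualId n) {X : Mat n m S} : dmul od M X = X ↔ X ≤ dmul od M X :=
  ⟨Eq.ge, (dmul_le_of_le_dualId hod hM X).antisymm⟩

theorem lres_eq_self_iff_of_le_dualId (hod : IsDualProduct od) {n m : ℕ}
    {M : Mat n n S} {lres : Mat n m S → Mat n m S} (gc : GaloisConnection lres (dmul od M))
    (hM : M ≤ dualId n) {X : Mat n m S} : lres X = X ↔ X ≤ dmul od M X := by
  have le_lres : X ≤ lres X := (gc.le_u_l X).trans (dmul_le_of_le_dualId hod hM _)
  rw [← le_lres.ge_iff_eq', gc]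

end DualMatrixProduct

section DualClosure

variable {od : S → S → S} {n : ℕ}

theorem dstar_le_dualId (B : Mat n n S) : dstar od B ≤ dualId n :=
  iInf_le (dpow od B) 0

theorem dstar_le_self (hod : IsDualProduct od) (B : Mat n n S) : dstar od B ≤ B :=
  (iInf_le (dpow od B) 1).trans_eq (dmul_dualId hod B)

theorem le_dpow_dmul_of_le_dmul (hod : IsDualProduct od) {m : ℕ} {B : Mat n n S}
    {X : Mat n m S} (hX : X ≤ dmul od B X) (k : ℕ) : X ≤ dmul od (dpow od B k) X := by
  induction k with
  | zero => exact (dualId_dmul hod X).ge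
  | succ k ih =>
    rw [dpow, dmul_assoc hod]
    exact hX.trans (dmul_mono hod le_rfl ih)

theorem le_dstar_dmul_iff (hod : IsDualProduct od) {m : ℕ} {B : Mat n n S} {X : Mat n m S} :
    X ≤ dmul od (dstar od B) X ↔ X ≤ dmul od B X := by
  refine ⟨fun h => h.trans (dmul_mono hod (dstar_le_self hod B) le_rfl), fun h => ?_⟩
  rw [dstar, iInf_dmul hod]
  exact le_iInf (le_dpow_dmul_of_le_dmul hod h)

end DualClosure

theorem dual_closure_equivalences
    (od : S → S → S) (hod : IsDualProduct od) {n p : ℕ}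
    (lres : ∀ {q : ℕ}, Mat n n S → Mat n q S → Mat n q S)
    (hlres : ∀ {q : ℕ} (M : Mat n n S) (Y : Mat n q S),
      IsLeast {Z : Mat n q S | Y ≤ dmul od M Z} (lres M Y))
    (B : Mat n n S) (X : Mat n p S) :
    List.TFAE
      [ X ≤ dmul od B X,
        lres B X ≤ X,
        lres (dstar od B) X = X,
        dmul od (dstar od B) X = X ] := by
  have gc (M : Mat n n S) : GaloisConnection (lres M : Mat n p S → Mat n p S) (dmul od M) :=
    galoisConnection_of_isLeast (fun _ _ h => dmul_mono hod le_rfl h) (hlres M)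
  tfae_have 1 ↔ 2 := (gc B X X).symm
  tfae_have 1 ↔ 4 := by
    rw [dmul_eq_self_iff_of_le_dualId hod (dstar_le_dualId B), le_dstar_dmul_iff hod]
  tfae_have 3 ↔ 4 := by
    rw [lres_eq_self_iff_of_le_dualId hod (gc _) (dstar_le_dualId B),
      dmul_eq_self_iff_of_le_dualId hod (dstar_le_dualId B)]
  tfae_finish
end

section
/- Let S be a complete idempotent semiring with dual product ⊙, A, B ∈ S^{n×n}, and suppose that for all X ∈ S^{n×m} the equality B_* ⧵♭ (A* ⊗ X) = (B_* ⧵♭ A*) ⊗ X holds. Then the map P : S^{n×m} → S^{n×m}, X ↦ (B_* ⧵♭ A*)* \ X, is a projector onto Im L_{A*} ∩ Im Λ_{B_*}; more precisely, P(X) is the greatest Y ≤ X satisfying A ⊗ Y ≤ Y ≤ B ⊙ Y. -/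
variable {S : Type*} [CompleteIdempotentSemiring S]

/-!
Write `C = B_* ⧵♭ A*`. If `A* ⊗ Y = Y`, the commutation hypothesis gives `C ⊗ Y = B_* ⧵♭ Y`,
and from this `C ⊗ Y ≤ Y` holds exactly when `A ⊗ Y ≤ Y ≤ B ⊙ Y`. So the sandwich solutions are
the closed elements of the closure operator `Y ↦ C* ⊗ Y`, and its right adjoint `X ↦ C* \ X`
sends `X` to the greatest closed element below `X`, which makes it a projector.
-/

namespace CompleteIdempotentSemiring

theorem mul_iSup {ι : Sort*} (a : S) (f : ι → S) : a * ⨆ i, f i = ⨆ i, a * f i := by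
  rw [iSup, mul_sSup, iSup_range]

theorem iSup_mul {ι : Sort*} (a : S) (f : ι → S) : (⨆ i, f i) * a = ⨆ i, f i * a := by
  rw [iSup, sSup_mul, iSup_range]

theorem mul_sup (a b c : S) : a * (b ⊔ c) = a * b ⊔ a * c := by
  rw [← sSup_pair, mul_sSup, iSup_pair]

theorem sup_mul (a b c : S) : (a ⊔ b) * c = a * c ⊔ b * c := by
  rw [← sSup_pair, sSup_mul, iSup_pair]

theorem bot_mul (a : S) : ⊥ * a = ⊥ := by
  simpa using sSup_mul a ∅

instance : MulLeftMono S where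
  elim a b c h := by
    simpa only [← mul_sup, sup_eq_right.2 h] using le_sup_left (a := a * b) (b := a * c)

instance : MulRightMono S where
  elim a b c h := by
    simpa only [← sup_mul, sup_eq_right.2 h] using le_sup_left (a := b * a) (b := c * a)

end CompleteIdempotentSemiring

open CompleteIdempotentSemiring

section KleeneStar

variable {n p q m : ℕ}

theorem mmul_mono {A A' : Mat n p S} {X X' : Mat p m S} (hA : A ≤ A') (hX : X ≤ X') :
    mmul A X ≤ mmul A' X' :=
  fun i j => iSup_mono fun k => mul_le_mul' (hA i k) (hX k j)

theorem mmul_assoc (A : Mat n p S) (B : Mat p q S) (C : Mat q m S) :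
    mmul (mmul A B) C = mmul A (mmul B C) := by
  funext i j
  simp only [mmul, iSup_mul, mul_iSup, mul_assoc]
  exact iSup_comm

theorem mmul_iSup_left {ι : Sort*} (F : ι → Mat n p S) (X : Mat p m S) :
    mmul (⨆ k, F k) X = ⨆ k, mmul (F k) X := by
  funext i j
  simp only [mmul, iSup_apply, iSup_mul]
  exact iSup_comm

theorem mmul_iSup_right {ι : Sort*} (A : Mat n p S) (F : ι → Mat p m S) :
    mmul A (⨆ k, F k) = ⨆ k, mmul A (F k) := by
  funext i j
  simp only [mmul, iSup_apply, mul_iSup]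
  exact iSup_comm

theorem mpow_zero_mmul (A : Mat n n S) (X : Mat n m S) : mmul (mpow A 0) X = X := by
  funext i j
  simp only [mmul, mpow, ite_mul, one_mul, bot_mul]
  simp only [← iSup_eq_if, iSup_iSup_eq_right]

theorem mstar_mmul (A : Mat n n S) (X : Mat n m S) :
    mmul (mstar A) X = ⨆ k, mmul (mpow A k) X :=
  mmul_iSup_left _ _

theorem le_mstar_mmul (A : Mat n n S) (X : Mat n m S) : X ≤ mmul (mstar A) X := by
  rw [mstar_mmul]
  exact le_iSup_of_le 0 (mpow_zero_mmul A X).ge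

theorem mmul_le_mstar_mmul (A : Mat n n S) (X : Mat n m S) :
    mmul A X ≤ mmul (mstar A) X := by
  rw [mstar_mmul]
  refine le_iSup_of_le 1 ?_
  rw [mpow, mmul_assoc, mpow_zero_mmul]

theorem mstar_mmul_le_iff {A : Mat n n S} {X : Mat n m S} :
    mmul (mstar A) X ≤ X ↔ mmul A X ≤ X := by
  refine ⟨(mmul_le_mstar_mmul A X).trans, fun h => ?_⟩
  rw [mstar_mmul]
  refine iSup_le fun k => ?_
  induction k with
  | zero => exact (mpow_zero_mmul A X).le
  | succ k ih => rw [mpow, mmul_assoc]; exact (mmul_mono le_rfl ih).trans h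

theorem mstar_mmul_mstar_mmul (A : Mat n n S) (X : Mat n m S) :
    mmul (mstar A) (mmul (mstar A) X) = mmul (mstar A) X := by
  refine le_antisymm (mstar_mmul_le_iff.2 ?_) (le_mstar_mmul A _)
  rw [mstar_mmul, mmul_iSup_right]
  exact iSup_le fun k => le_iSup_of_le (k + 1) (mmul_assoc A (mpow A k) X).ge

variable (m) in
def mstarClosure (A : Mat n n S) : ClosureOperator (Mat n m S) :=
  .mk' (mmul (mstar A)) (fun _ _ h => mmul_mono le_rfl h) (le_mstar_mmul A)
    fun X => (mstar_mmul_mstar_mmul A X).le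

theorem isClosed_mstarClosure_iff {A : Mat n n S} {X : Mat n m S} :
    (mstarClosure m A).IsClosed X ↔ mmul A X ≤ X :=
  ClosureOperator.isClosed_iff_closure_le.trans mstar_mmul_le_iff

end KleeneStar

namespace IsDualProduct

variable {od : S → S → S} {n p m : ℕ}

/-- `od` turns the order dual into a complete idempotent semiring, over which `dmul od`, `dpow od`
and `dstar od` are `mmul`, `mpow` and `mstar`. -/
abbrev dualSemiring (hod : IsDualProduct od) : CompleteIdempotentSemiring Sᵒᵈ where
  __ := (inferInstance : CompleteLattice Sᵒᵈ)
  mul a b := OrderDual.toDual (od (OrderDual.ofDual a) (OrderDual.ofDual b))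
  one := OrderDual.toDual 1
  npow k a := OrderDual.toDual ((fun x => od x (OrderDual.ofDual a))^[k] 1)
  npow_zero _ := rfl
  npow_succ k _ := Function.iterate_succ_apply' _ k 1
  mul_assoc := hod.assoc
  one_mul := hod.one_od
  mul_one := hod.od_one
  mul_sSup := hod.od_sInf
  sSup_mul := hod.sInf_od

theorem dpow_eq_mpow (hod : IsDualProduct od) (B : Mat n n S) (k : ℕ) :
    dpow od B k = @mpow Sᵒᵈ hod.dualSemiring n B k := by
  induction k with
  | zero => rfl
  | succ k ih => rw [dpow, ih]; rfl

theorem dstar_eq_mstar (hod : IsDualProduct od) (B : Mat n n S) :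
    dstar od B = @mstar Sᵒᵈ hod.dualSemiring n B := by
  simp only [dstar, mstar, dpow_eq_mpow hod]
  rfl

theorem dmul_mono_right (hod : IsDualProduct od) (A : Mat n p S) :
    Monotone (dmul od A : Mat p m S → Mat n m S) :=
  fun _ _ h => @mmul_mono Sᵒᵈ hod.dualSemiring n p m A A _ _ le_rfl h

theorem dstar_dmul_le (hod : IsDualProduct od) (B : Mat n n S) (X : Mat n m S) :
    dmul od (dstar od B) X ≤ X := by
  rw [dstar_eq_mstar hod]
  exact @le_mstar_mmul Sᵒᵈ hod.dualSemiring n m B X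

theorem le_dstar_dmul_iff (hod : IsDualProduct od) {B : Mat n n S} {X : Mat n m S} :
    X ≤ dmul od (dstar od B) X ↔ X ≤ dmul od B X := by
  rw [dstar_eq_mstar hod]
  exact @mstar_mmul_le_iff Sᵒᵈ hod.dualSemiring n m B X

end IsDualProduct

namespace ClosureOperator

variable {α : Type*} [PartialOrder α] (c : ClosureOperator α) {g : α → α}

theorem isGreatest_isClosed_le_of_isGreatest (hg : ∀ x, IsGreatest {z | c z ≤ x} (g x))
    (x : α) : IsGreatest {y | y ≤ x ∧ c.IsClosed y} (g x) := by
  refine ⟨⟨(c.le_closure _).trans (hg x).1, c.isClosed_iff_closure_le.2 ?_⟩, ?_⟩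
  · exact (hg x).2 ((c.idempotent (g x)).trans_le (hg x).1)
  · rintro y ⟨hyx, hy⟩
    exact (hg x).2 (hy.closure_eq.trans_le hyx)

theorem idempotent_of_isGreatest (hg : ∀ x, IsGreatest {z | c z ≤ x} (g x)) (x : α) :
    g (g x) = g x :=
  have h := c.isGreatest_isClosed_le_of_isGreatest hg
  le_antisymm (h (g x)).1.1 ((h (g x)).2 ⟨le_rfl, (h x).1.2⟩)

end ClosureOperator

theorem mmul_le_self_iff_of_residual_comm {od : S → S → S} (hod : IsDualProduct od) {n m : ℕ}
    {A B C : Mat n n S}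
    {R : Mat n m S → Mat n m S} (hR : ∀ Y, IsLeast {Z | Y ≤ dmul od (dstar od B) Z} (R Y))
    (hcomm : ∀ X, R (mmul (mstar A) X) = mmul C X) {Y : Mat n m S} :
    mmul C Y ≤ Y ↔ mmul A Y ≤ Y ∧ Y ≤ dmul od B Y := by
  constructor
  · intro hC
    have hA : mmul (mstar A) Y ≤ dmul od (dstar od B) Y :=
      calc mmul (mstar A) Y ≤ dmul od (dstar od B) (R (mmul (mstar A) Y)) := (hR _).1
        _ = dmul od (dstar od B) (mmul C Y) := by rw [hcomm]
        _ ≤ dmul od (dstar od B) Y := hod.dmul_mono_right _ hC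
    exact ⟨mstar_mmul_le_iff.1 (hA.trans (hod.dstar_dmul_le B Y)),
      hod.le_dstar_dmul_iff.1 ((le_mstar_mmul A Y).trans hA)⟩
  · rintro ⟨hA, hB⟩
    have hAY : mmul (mstar A) Y = Y := le_antisymm (mstar_mmul_le_iff.2 hA) (le_mstar_mmul A Y)
    rw [← hcomm, hAY]
    exact (hR Y).2 (hod.le_dstar_dmul_iff.2 hB)

theorem projector_onto_sandwich_solutions
    (od : S → S → S) (hod : IsDualProduct od) {n m : ℕ}
    (lres : ∀ {q : ℕ}, Mat n n S → Mat n q S → Mat n q S)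
    (hlres : ∀ {q : ℕ} (M : Mat n n S) (Y : Mat n q S),
      IsLeast {Z : Mat n q S | Y ≤ dmul od M Z} (lres M Y))
    (ldiv : ∀ {q : ℕ}, Mat n n S → Mat n q S → Mat n q S)
    (hldiv : ∀ {q : ℕ} (M : Mat n n S) (Y : Mat n q S),
      IsGreatest {Z : Mat n q S | mmul M Z ≤ Y} (ldiv M Y))
    (A B : Mat n n S)
    (hcomm : ∀ X : Mat n m S,
      lres (dstar od B) (mmul (mstar A) X) = mmul (lres (dstar od B) (mstar A)) X) :
    (∀ X : Mat n m S,
        ldiv (mstar (lres (dstar od B) (mstar A)))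
            (ldiv (mstar (lres (dstar od B) (mstar A))) X)
          = ldiv (mstar (lres (dstar od B) (mstar A))) X) ∧
      ∀ X : Mat n m S,
        IsGreatest {Y : Mat n m S | Y ≤ X ∧ mmul A Y ≤ Y ∧ Y ≤ dmul od B Y}
          (ldiv (mstar (lres (dstar od B) (mstar A))) X) := by
  set C := lres (dstar od B) (mstar A)
  have hclosed (Y : Mat n m S) :
      (mstarClosure m C).IsClosed Y ↔ mmul A Y ≤ Y ∧ Y ≤ dmul od B Y :=
    isClosed_mstarClosure_iff.trans
      (mmul_le_self_iff_of_residual_comm hod (hlres (dstar od B)) hcomm)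
  have hdiv (X : Mat n m S) : IsGreatest {Z | mstarClosure m C Z ≤ X} (ldiv (mstar C) X) :=
    hldiv (mstar C) X
  refine ⟨(mstarClosure m C).idempotent_of_isGreatest hdiv, fun X => ?_⟩
  simpa only [hclosed] using (mstarClosure m C).isGreatest_isClosed_le_of_isGreatest hdiv X
end
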